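/- arXiv:0812.4352 — 3 statements merged into one kernel-verified Lean document; each statement's English description precedes it below -/
import Mathlib

section
/- Fix integers n ≥ 1 and P ≥ 1, and set c_n = 3·2^{n-1} - 2. Then for every real number x, Σ_{l=2^{n-1}}^{2^n - 1} |1/(x - (2l-1)πi)| · (|2l - 1 - c_n| / c_n)^P ≤ (1/(2π)) · (1/3^P). -/
open Complex Real

lemma sumAbsInt (t : ℕ) : ∑ k ∈ Finset.range (2*t), |2*(t:ℤ) - 1 - 2*(k:ℤ)| = 2*(t:ℤ)^2 := by
  induction t with
  | zero => simp
  | succ t ih =>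
    have h2 : 2*(t+1) = (2*t+1)+1 := by ring
    rw [h2, Finset.sum_range_succ, Finset.sum_range_succ']
    have key : ∀ k ∈ Finset.range (2*t),
        |2*((t:ℤ)+1) - 1 - 2*((k:ℤ)+1)| = |2*(t:ℤ)-1-2*(k:ℤ)| := by
      intro k _; congr 1; ring
    push_cast
    rw [Finset.sum_congr rfl key, ih]
    have e1 : |2*((t:ℤ)+1) - 1 - 0| = 2*t+1 := by
      rw [abs_of_nonneg (by linarith [Int.natCast_nonneg t] : (0:ℤ) ≤ 2*((t:ℤ)+1)-1-0)]; ring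
    have e2 : |2*((t:ℤ)+1) - 1 - 2*(2*(t:ℤ)+1)| = 2*t+1 := by
      rw [abs_of_nonpos (by linarith [Int.natCast_nonneg t] : 2*((t:ℤ)+1)-1-2*(2*(t:ℤ)+1) ≤ 0)]; ring
    rw [e1, e2]; ring

lemma sumAbsReal (t : ℕ) : ∑ k ∈ Finset.range (2*t), |2*(t:ℝ) - 1 - 2*(k:ℝ)| = 2*(t:ℝ)^2 := by
  exact_mod_cast congrArg (Int.cast : ℤ → ℝ) (sumAbsInt t)

lemma norm_bound (x a : ℝ) (ha : 0 < a) :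
    ‖(1:ℂ)/((x:ℂ) - (a:ℂ)*(Real.pi:ℂ)*Complex.I)‖ ≤ 1/(a*Real.pi) := by
  have hπ := Real.pi_pos
  rw [norm_div, norm_one]
  have him : ((x:ℂ) - (a:ℂ)*(Real.pi:ℂ)*Complex.I).im = -(a*Real.pi) := by simp
  have hle : a*Real.pi ≤ ‖(x:ℂ) - (a:ℂ)*(Real.pi:ℂ)*Complex.I‖ := by
    calc a*Real.pi = |((x:ℂ) - (a:ℂ)*(Real.pi:ℂ)*Complex.I).im| := by
          rw [him, _root_.abs_neg, _root_.abs_of_nonneg (by positivity)]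
      _ ≤ ‖(x:ℂ) - (a:ℂ)*(Real.pi:ℂ)*Complex.I‖ := Complex.abs_im_le_norm _
  exact one_div_le_one_div_of_le (by positivity) hle

/-- Error bound for the `n`-th multipole group: with `c_n = 3·2^{n-1} - 2`,
for every real `x`,
`∑_{l=2^{n-1}}^{2^n-1} |1/(x - (2l-1)πi)| · (|2l-1-c_n|/c_n)^P ≤ (1/(2π))·(1/3^P)`. -/
theorem stmt_6 (n P : ℕ) (hn : 1 ≤ n) (hP : 1 ≤ P) (x : ℝ) :
    ∑ l ∈ Finset.Icc (2 ^ (n - 1) : ℕ) (2 ^ n - 1),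
      ‖(1 : ℂ) / ((x : ℂ) - (2 * (l : ℂ) - 1) * (Real.pi : ℂ) * Complex.I)‖ *
        (|2 * (l : ℝ) - 1 - (3 * 2 ^ (n - 1) - 2)| /
          (3 * 2 ^ (n - 1) - 2 : ℝ)) ^ P
      ≤ 1 / (2 * Real.pi) * (1 / 3 ^ P) := by
  have hπ : 0 < Real.pi := Real.pi_pos
  rcases Nat.lt_or_ge n 2 with h1 | h2
  · -- n = 1
    have hn1 : n = 1 := by omega
    subst hn1
    norm_num
    rw [zero_pow (by omega : P ≠ 0), mul_zero]
    positivity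
  · -- n ≥ 2
    set m : ℕ := 2^(n-1) with hm
    have hm4 : (2:ℕ) ≤ m := by
      calc (2:ℕ) = 2^1 := rfl
        _ ≤ 2^(n-1) := Nat.pow_le_pow_right (by norm_num) (by omega)
    have hm2 : (2:ℝ) ≤ (m:ℝ) := by exact_mod_cast hm4
    obtain ⟨t, ht⟩ : ∃ t, m = 2*t := ⟨2^(n-2), by rw [hm, ← pow_succ']; congr 1; omega⟩
    have hcast : ((2:ℝ))^(n-1) = (m:ℝ) := by rw [hm]; push_cast; ring
    have hpow : (2:ℕ)^n - 1 = 2*m - 1 := by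
      have : (2:ℕ)^n = 2*m := by rw [hm, ← pow_succ']; congr 1; omega
      omega
    rw [hcast, hpow]
    have hc : (0:ℝ) < 3*(m:ℝ)-2 := by linarith
    have h2m : (0:ℝ) < 2*(m:ℝ)-1 := by linarith
    -- termwise bound
    have hterm : ∀ l ∈ Finset.Icc m (2*m-1),
        ‖(1 : ℂ) / ((x : ℂ) - (2 * (l : ℂ) - 1) * (Real.pi : ℂ) * Complex.I)‖ *
          (|2 * (l : ℝ) - 1 - (3 * (m:ℝ) - 2)| / (3 * (m:ℝ) - 2)) ^ P
        ≤ ((1/3:ℝ)^(P-1) * (1/(((2*(m:ℝ)-1)*Real.pi)*(3*(m:ℝ)-2)))) *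
            |2 * (l : ℝ) - 1 - (3 * (m:ℝ) - 2)| := by
      intro l hl
      rw [Finset.mem_Icc] at hl
      have hlR1 : (m:ℝ) ≤ (l:ℝ) := Nat.cast_le.mpr hl.1
      have hlR2 : (l:ℝ) ≤ 2*(m:ℝ)-1 := by
        have h := (Nat.cast_le (α := ℝ)).mpr hl.2
        rwa [Nat.cast_sub (by omega), Nat.cast_mul, Nat.cast_ofNat, Nat.cast_one] at h
      have ha : (0:ℝ) < 2*(l:ℝ)-1 := by linarith
      have hnorm : ‖(1 : ℂ) / ((x : ℂ) - (2 * (l : ℂ) - 1) * (Real.pi : ℂ) * Complex.I)‖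
          ≤ 1/((2*(l:ℝ)-1)*Real.pi) := by
        have h := norm_bound x (2*(l:ℝ)-1) ha
        rw [show (((2*(l:ℝ)-1 : ℝ)):ℂ) = 2*(l:ℂ)-1 from by push_cast; ring] at h
        exact h
      have hr0 : 0 ≤ |2 * (l : ℝ) - 1 - (3 * (m:ℝ) - 2)| / (3 * (m:ℝ) - 2) := by positivity
      have hr3 : |2 * (l : ℝ) - 1 - (3 * (m:ℝ) - 2)| / (3 * (m:ℝ) - 2) ≤ 1/3 := by
        rw [div_le_iff₀ hc]
        rw [abs_le]
        constructor <;> nlinarith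
      have hrP : (|2 * (l : ℝ) - 1 - (3 * (m:ℝ) - 2)| / (3 * (m:ℝ) - 2)) ^ P
          ≤ (1/3:ℝ)^(P-1) * (|2 * (l : ℝ) - 1 - (3 * (m:ℝ) - 2)| / (3 * (m:ℝ) - 2)) := by
        calc (|2 * (l : ℝ) - 1 - (3 * (m:ℝ) - 2)| / (3 * (m:ℝ) - 2)) ^ P
            = (|2 * (l : ℝ) - 1 - (3 * (m:ℝ) - 2)| / (3 * (m:ℝ) - 2)) ^ (P-1) *
              (|2 * (l : ℝ) - 1 - (3 * (m:ℝ) - 2)| / (3 * (m:ℝ) - 2)) := by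
              rw [← pow_succ]; congr 1; omega
          _ ≤ (1/3:ℝ)^(P-1) * (|2 * (l : ℝ) - 1 - (3 * (m:ℝ) - 2)| / (3 * (m:ℝ) - 2)) :=
              mul_le_mul_of_nonneg_right (pow_le_pow_left₀ hr0 hr3 _) hr0
      calc ‖(1 : ℂ) / ((x : ℂ) - (2 * (l : ℂ) - 1) * (Real.pi : ℂ) * Complex.I)‖ *
            (|2 * (l : ℝ) - 1 - (3 * (m:ℝ) - 2)| / (3 * (m:ℝ) - 2)) ^ P
          ≤ (1/((2*(l:ℝ)-1)*Real.pi)) *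
            ((1/3:ℝ)^(P-1) * (|2 * (l : ℝ) - 1 - (3 * (m:ℝ) - 2)| / (3 * (m:ℝ) - 2))) := by
            apply mul_le_mul hnorm hrP (pow_nonneg hr0 P) (by positivity)
        _ ≤ (1/((2*(m:ℝ)-1)*Real.pi)) *
            ((1/3:ℝ)^(P-1) * (|2 * (l : ℝ) - 1 - (3 * (m:ℝ) - 2)| / (3 * (m:ℝ) - 2))) := by
            apply mul_le_mul_of_nonneg_right _ (by positivity)
            apply one_div_le_one_div_of_le (by positivity)
            apply mul_le_mul_of_nonneg_right (by linarith) hπ.le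
        _ = ((1/3:ℝ)^(P-1) * (1/(((2*(m:ℝ)-1)*Real.pi)*(3*(m:ℝ)-2)))) *
            |2 * (l : ℝ) - 1 - (3 * (m:ℝ) - 2)| := by
            have hA : ((2*(m:ℝ)-1)*Real.pi) ≠ 0 := by positivity
            have hC : (3*(m:ℝ)-2) ≠ 0 := ne_of_gt hc
            field_simp
            try ring
            try (left; trivial)
    -- sum of absolute values
    have hsum : ∑ l ∈ Finset.Icc m (2*m-1), |2 * (l : ℝ) - 1 - (3 * (m:ℝ) - 2)|
        = (m:ℝ)^2/2 := by
      rw [← Finset.Ico_add_one_right_eq_Icc, show (2*m-1)+1 = 2*m from by omega,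
        Finset.sum_Ico_eq_sum_range, show 2*m - m = m from by omega]
      have hcg : ∀ k ∈ Finset.range m,
          |2 * ((m + k : ℕ):ℝ) - 1 - (3 * (m:ℝ) - 2)| = |2*(t:ℝ) - 1 - 2*(k:ℝ)| := by
        intro k _
        rw [← abs_neg]
        congr 1
        push_cast [ht]
        ring
      rw [Finset.sum_congr rfl hcg, show m = 2*t from ht, sumAbsReal]
      push_cast [ht]
      ring
    calc ∑ l ∈ Finset.Icc m (2*m-1),
          ‖(1 : ℂ) / ((x : ℂ) - (2 * (l : ℂ) - 1) * (Real.pi : ℂ) * Complex.I)‖ *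
            (|2 * (l : ℝ) - 1 - (3 * (m:ℝ) - 2)| / (3 * (m:ℝ) - 2)) ^ P
        ≤ ∑ l ∈ Finset.Icc m (2*m-1),
            ((1/3:ℝ)^(P-1) * (1/(((2*(m:ℝ)-1)*Real.pi)*(3*(m:ℝ)-2)))) *
              |2 * (l : ℝ) - 1 - (3 * (m:ℝ) - 2)| := Finset.sum_le_sum hterm
      _ = ((1/3:ℝ)^(P-1) * (1/(((2*(m:ℝ)-1)*Real.pi)*(3*(m:ℝ)-2)))) * ((m:ℝ)^2/2) := by
          rw [← Finset.mul_sum, hsum]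
      _ = (1/3:ℝ)^(P-1) * ((1/(((2*(m:ℝ)-1)*Real.pi)*(3*(m:ℝ)-2))) * ((m:ℝ)^2/2)) := by
          ring
      _ ≤ (1/3:ℝ)^(P-1) * (1/(2*Real.pi) * (1/3)) := by
          apply mul_le_mul_of_nonneg_left _ (by positivity)
          rw [mul_comm, mul_one_div, one_div_mul_one_div,
            div_le_div_iff₀ (by positivity) (by positivity)]
          nlinarith [mul_nonneg (show (0:ℝ) ≤ 6*(m:ℝ)^2-14*(m:ℝ)+4 by nlinarith) hπ.le]
      _ = 1 / (2 * Real.pi) * (1 / 3 ^ P) := by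
          rw [show (1/3:ℝ)^(P-1)*(1/(2*Real.pi)*(1/3))
              = 1/(2*Real.pi)*((1/3:ℝ)^((P-1)+1)) from by rw [pow_succ]; ring,
            show (P-1)+1 = P from by omega, one_div_pow]
end

section
/- Fix a real number x. Then, as the positive integer m tends to infinity, Im ψ(m - 1/2 + ix/π) - arctan( 2x/((2m-1)π) ) = O(1/m^2); that is, there exist a constant C > 0 and an integer M such that for all m ≥ M, |Im ψ(m - 1/2 + ix/π) - arctan(2x/((2m-1)π))| ≤ C/m^2. -/
open Complex Real
open Filter Finset Metric Topology

/-- The digamma function `ψ = Γ'/Γ`, the logarithmic derivative of the complex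
Gamma function. -/
noncomputable def digamma (z : ℂ) : ℂ := deriv Complex.Gamma z / Complex.Gamma z

-- term functions
noncomputable def fterm (j : ℕ) (w : ℂ) : ℂ := w / (j + 1) - Complex.log (1 + w / (j + 1))

lemma fterm_bound {R : ℝ} (hR : 0 < R) (j : ℕ) {w : ℂ} (hw : ‖w‖ ≤ R) (hre : 0 < w.re) :
    ‖fterm j w‖ ≤ 4 * (R ^ 2 + 1) * ((R + Real.log (1 + R) + Real.pi) + 1) / ((j : ℝ) + 1) ^ 2 := by
  set K : ℝ := R + Real.log (1 + R) + Real.pi with hK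
  have hK0 : 0 ≤ K := by
    have h1 : 0 ≤ Real.log (1 + R) := Real.log_nonneg (by linarith)
    have := Real.pi_pos
    positivity
  have hj1 : (0:ℝ) < (j : ℝ) + 1 := by positivity
  have hjc : ((j : ℂ) + 1) = (((j : ℝ) + 1 : ℝ) : ℂ) := by push_cast; ring
  have hnv : ‖w / ((j : ℂ) + 1)‖ = ‖w‖ / ((j : ℝ) + 1) := by
    rw [norm_div, hjc, Complex.norm_real, Real.norm_of_nonneg hj1.le]
  have hvR : ‖w / ((j : ℂ) + 1)‖ ≤ R / ((j : ℝ) + 1) := by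
    rw [hnv]; gcongr
  set v : ℂ := w / ((j : ℂ) + 1) with hv
  have hfv : fterm j w = -(Complex.log (1 + v) - v) := by
    simp only [fterm, ← hv]; ring
  by_cases hcase : ‖v‖ ≤ 1/2
  · have hlt : ‖v‖ < 1 := by linarith
    have h1 : ‖Complex.log (1 + v) - v‖ ≤ ‖v‖ ^ 2 * (1 - ‖v‖)⁻¹ / 2 :=
      Complex.norm_log_one_add_sub_self_le hlt
    have h2 : (1 - ‖v‖)⁻¹ ≤ 2 := by
      rw [inv_le_comm₀ (by linarith) (by norm_num)]
      linarith
    have h3 : ‖fterm j w‖ ≤ ‖v‖ ^ 2 := by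
      rw [hfv, norm_neg]
      calc ‖Complex.log (1 + v) - v‖ ≤ ‖v‖ ^ 2 * (1 - ‖v‖)⁻¹ / 2 := h1
        _ ≤ ‖v‖ ^ 2 * 2 / 2 := by gcongr
        _ = ‖v‖ ^ 2 := by ring
    have h4 : ‖v‖ ^ 2 ≤ (R / ((j:ℝ)+1)) ^ 2 := by
      exact pow_le_pow_left₀ (norm_nonneg v) hvR 2
    refine h3.trans (h4.trans ?_)
    rw [div_pow, div_le_div_iff₀ (by positivity) (by positivity)]
    have h5 : R ^ 2 ≤ 4 * (R^2 + 1) * (K + 1) := by nlinarith [hK0]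
    nlinarith [h5, sq_nonneg ((j:ℝ)+1)]
  · push_neg at hcase
    have hjR : ((j:ℝ) + 1) < 2 * R := by
      have h5 : (1:ℝ)/2 < R / ((j:ℝ)+1) := lt_of_lt_of_le hcase hvR
      rw [div_lt_div_iff₀ (by norm_num) hj1] at h5
      linarith
    have hvre : v.re = w.re / ((j:ℝ)+1) := by
      rw [hv, hjc, Complex.div_ofReal_re]
    have hre1 : (0:ℝ) < (1 + v).re := by
      simp only [Complex.add_re, Complex.one_re, hvre]
      positivity
    have habs1 : (1:ℝ) ≤ ‖1 + v‖ := by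
      calc (1:ℝ) ≤ 1 + v.re := by
            have : 0 < v.re := by rw [hvre]; positivity
            linarith
        _ = (1 + v).re := by simp
        _ ≤ ‖1 + v‖ := Complex.re_le_norm _
    have habs2 : ‖1 + v‖ ≤ 1 + R := by
      calc ‖1 + v‖ ≤ ‖(1:ℂ)‖ + ‖v‖ := norm_add_le _ _
        _ ≤ 1 + R := by
            simp only [norm_one]
            gcongr
            calc ‖v‖ = ‖v‖ := rfl
              _ ≤ R / ((j:ℝ)+1) := hvR
              _ ≤ R / 1 := by gcongr; linarith
              _ = R := by ring
    have hlog : ‖Complex.log (1 + v)‖ ≤ Real.log (1 + R) + Real.pi := by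
      calc ‖Complex.log (1 + v)‖ = ‖Complex.log (1 + v)‖ := rfl
        _ ≤ |(Complex.log (1+v)).re| + |(Complex.log (1+v)).im| :=
            Complex.norm_le_abs_re_add_abs_im _
        _ ≤ Real.log (1 + R) + Real.pi := by
            rw [Complex.log_re, Complex.log_im]
            gcongr
            · rw [_root_.abs_of_nonneg (Real.log_nonneg habs1)]
              exact Real.log_le_log (by linarith) habs2
            · exact Complex.abs_arg_le_pi _
    have hbf : ‖fterm j w‖ ≤ K := by
      rw [hfv, norm_neg]
      calc ‖Complex.log (1 + v) - v‖ ≤ ‖Complex.log (1+v)‖ + ‖v‖ := norm_sub_le _ _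
        _ ≤ (Real.log (1 + R) + Real.pi) + R := by
            gcongr
            calc ‖v‖ ≤ R / ((j:ℝ)+1) := hvR
              _ ≤ R / 1 := by gcongr; linarith
              _ = R := by ring
        _ = K := by rw [hK]; ring
    refine hbf.trans ?_
    rw [le_div_iff₀ (by positivity)]
    have hsq : ((j:ℝ)+1)^2 ≤ 4 * R^2 := by nlinarith [hjR, hj1]
    nlinarith [hsq, hK0]

lemma usummable {R : ℝ} : Summable (fun j : ℕ =>
    4 * (R ^ 2 + 1) * ((R + Real.log (1 + R) + Real.pi) + 1) / ((j : ℝ) + 1) ^ 2) := by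
  apply Summable.mul_left
  have := (summable_nat_add_iff (f := fun n : ℕ => 1 / (n : ℝ) ^ 2) 1).2
    (Real.summable_one_div_nat_pow.2 one_lt_two)
  refine this.congr fun j => ?_
  push_cast
  rw [one_div]

lemma one_add_div_ne {w : ℂ} (hw : 0 < w.re) (j : ℕ) : (1 + w / ((j:ℂ)+1)) ≠ 0 := by
  have hjc : ((j : ℂ) + 1) = (((j : ℝ) + 1 : ℝ) : ℂ) := by push_cast; ring
  have hre : (1 + w / ((j:ℂ)+1)).re = 1 + w.re / ((j:ℝ)+1) := by
    rw [hjc, Complex.add_re, Complex.one_re, Complex.div_ofReal_re]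
  intro h
  rw [h] at hre
  simp only [Complex.zero_re] at hre
  have hj1 : (0:ℝ) < (j:ℝ)+1 := by positivity
  have : 0 < w.re / ((j:ℝ)+1) := by positivity
  linarith

lemma exp_A_eq {n : ℕ} (hn : 1 ≤ n) {w : ℂ} (hw : 0 < w.re) (hw0 : w ≠ 0) :
    Complex.exp (w * ((Real.log n - (harmonic n : ℝ) : ℝ) : ℂ) + ∑ j ∈ Finset.range n, fterm j w)
      / w = Complex.GammaSeq w n := by
  have hn0 : ((n:ℂ)) ≠ 0 := Nat.cast_ne_zero.2 (by omega)
  have hjne : ∀ j : ℕ, ((j:ℂ)+1) ≠ 0 := fun j => by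
    have : ((j : ℂ) + 1) = (((j : ℝ) + 1 : ℝ) : ℂ) := by push_cast; ring
    rw [this]
    exact_mod_cast (by positivity : ((j:ℝ)+1) ≠ 0)
  have hharm : ((harmonic n : ℚ) : ℂ) = ∑ j ∈ Finset.range n, ((j:ℂ)+1)⁻¹ := by
    rw [harmonic]
    push_cast
    ring
  have hws : w * ∑ j ∈ Finset.range n, ((j:ℂ)+1)⁻¹ = ∑ j ∈ Finset.range n, w/((j:ℂ)+1) := by
    rw [Finset.mul_sum]
    simp [div_eq_mul_inv]
  have hA : w * ((Real.log n - (harmonic n : ℝ) : ℝ) : ℂ) + ∑ j ∈ Finset.range n, fterm j w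
      = w * Complex.log n - ∑ j ∈ Finset.range n, Complex.log (1 + w / ((j:ℂ)+1)) := by
    simp only [fterm, Finset.sum_sub_distrib]
    push_cast
    rw [mul_sub, hharm, hws]
    ring
  have hexp : Complex.exp (w * ((Real.log n - (harmonic n : ℝ) : ℝ) : ℂ)
      + ∑ j ∈ Finset.range n, fterm j w)
      = (n:ℂ) ^ w / ∏ j ∈ Finset.range n, (1 + w / ((j:ℂ)+1)) := by
    rw [hA, Complex.exp_sub, Complex.exp_sum]
    congr 1
    · rw [Complex.cpow_def_of_ne_zero hn0, mul_comm]
    · exact Finset.prod_congr rfl fun j _ => Complex.exp_log (one_add_div_ne hw j)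
  have hprod : ∏ j ∈ Finset.range (n+1), (w + j)
      = w * ((n.factorial : ℂ) * ∏ j ∈ Finset.range n, (1 + w / ((j:ℂ)+1))) := by
    rw [Finset.prod_range_succ']
    have h1 : ∀ j ∈ Finset.range n, (w + ((j:ℕ)+1 : ℕ)) = ((j:ℂ)+1) * (1 + w / ((j:ℂ)+1)) := by
      intro j _
      push_cast
      rw [mul_add, mul_one, mul_div_cancel₀ _ (hjne j)]
      ring
    rw [Finset.prod_congr rfl h1, Finset.prod_mul_distrib]
    have h2 : ∏ j ∈ Finset.range n, ((j:ℂ)+1) = (n.factorial : ℂ) := by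
      rw [show (fun j : ℕ => ((j:ℂ)+1)) = (fun j : ℕ => ((j+1 : ℕ) : ℂ)) from by ext j; push_cast; ring]
      rw [← Nat.cast_prod]
      congr 1
      exact Finset.prod_range_add_one_eq_factorial n
    push_cast [h2]
    ring
  rw [Complex.GammaSeq, hexp, hprod]
  have hfacne : ((n.factorial : ℂ)) ≠ 0 := Nat.cast_ne_zero.2 (Nat.factorial_ne_zero n)
  have hPne : (∏ j ∈ Finset.range n, (1 + w / ((j:ℂ)+1))) ≠ 0 :=
    Finset.prod_ne_zero_iff.2 fun j _ => one_add_div_ne hw j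
  field_simp

lemma gammaSeq_unif {z : ℂ} (hz : 0 < z.re) :
    TendstoUniformlyOn (fun (n : ℕ) w => Complex.GammaSeq w n) Complex.Gamma atTop
      (Metric.ball z (z.re / 2)) := by
  set S := Metric.ball z (z.re / 2) with hS
  set R : ℝ := ‖z‖ + z.re / 2 with hRdef
  have hR : 0 < R := by
    have := Complex.re_le_norm z
    have : 0 < ‖z‖ := lt_of_lt_of_le hz (Complex.re_le_norm z)
    positivity
  have hwre : ∀ w ∈ S, z.re / 2 < w.re := by
    intro w hw
    rw [hS, Metric.mem_ball, Complex.dist_eq] at hw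
    have h1 : |(w - z).re| ≤ ‖w - z‖ := Complex.abs_re_le_norm _
    have h2 : (w - z).re = w.re - z.re := by simp
    have : |w.re - z.re| < z.re / 2 := by rw [← h2]; exact lt_of_le_of_lt h1 hw
    cases' abs_lt.1 this with hl hr
    linarith
  have hwR : ∀ w ∈ S, ‖w‖ ≤ R := by
    intro w hw
    rw [hS, Metric.mem_ball, Complex.dist_eq] at hw
    calc ‖w‖ = ‖z + (w - z)‖ := by ring_nf
      _ ≤ ‖z‖ + ‖w - z‖ := norm_add_le _ _
      _ ≤ R := by
          rw [hRdef]
          have : ‖w - z‖ = ‖w - z‖ := rfl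
          rw [this]
          linarith [hw.le]
  have hw0 : ∀ w ∈ S, w ≠ 0 := by
    intro w hw h0
    have := hwre w hw
    rw [h0] at this
    simp at this
    linarith
  have hwpos : ∀ w ∈ S, 0 < w.re := fun w hw => lt_trans (by linarith) (hwre w hw)
  set γ : ℝ := Real.eulerMascheroniConstant with hγ
  set c : ℕ → ℝ := fun n => Real.log n - (harmonic n : ℝ) with hcdef
  set u : ℕ → ℝ := fun j =>
    4 * (R ^ 2 + 1) * ((R + Real.log (1 + R) + Real.pi) + 1) / ((j : ℝ) + 1) ^ 2 with hu
  set G : ℂ → ℂ := fun w => w * ((-γ : ℝ) : ℂ) + ∑' j, fterm j w with hG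
  have hc : Filter.Tendsto c atTop (𝓝 (-γ)) := by
    have := Real.tendsto_harmonic_sub_log.neg
    refine this.congr fun n => ?_
    rw [hcdef]
    ring
  have hbound : ∀ (j : ℕ), ∀ w ∈ S, ‖fterm j w‖ ≤ u j :=
    fun j w hw => fterm_bound hR j (hwR w hw) (hwpos w hw)
  have part2 : TendstoUniformlyOn (fun N w => ∑ j ∈ Finset.range N, fterm j w)
      (fun w => ∑' j, fterm j w) atTop S :=
    tendstoUniformlyOn_tsum_nat usummable hbound
  have part1 : TendstoUniformlyOn (fun n w => w * ((c n : ℝ) : ℂ))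
      (fun w => w * ((-γ : ℝ) : ℂ)) atTop S := by
    rw [Metric.tendstoUniformlyOn_iff]
    intro ε hε
    have h := (Metric.tendsto_nhds.mp hc) (ε / (R + 1)) (by positivity)
    filter_upwards [h] with n hn w hw
    have h2 : dist (w * ((-γ : ℝ) : ℂ)) (w * ((c n : ℝ) : ℂ)) = ‖w‖ * |(-γ) - c n| := by
      rw [dist_eq_norm]
      have : w * ((-γ : ℝ) : ℂ) - w * ((c n : ℝ) : ℂ) = w * (((-γ - c n : ℝ)) : ℂ) := by
        push_cast; ring
      rw [this, norm_mul, Complex.norm_real, Real.norm_eq_abs]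
    rw [h2]
    have h3 : |(-γ) - c n| < ε / (R + 1) := by
      rw [Real.dist_eq] at hn
      rw [abs_sub_comm]
      exact hn
    calc ‖w‖ * |(-γ) - c n| ≤ R * |(-γ) - c n| := by gcongr; exact hwR w hw
      _ < R * (ε / (R + 1)) := by
          apply mul_lt_mul_of_pos_left h3 hR
      _ < ε := by
          rw [mul_div_assoc']
          rw [div_lt_iff₀ (by positivity)]
          nlinarith
  have hAG : TendstoUniformlyOn
      (fun n w => w * ((c n : ℝ) : ℂ) + ∑ j ∈ Finset.range n, fterm j w) G atTop S :=
    part1.add part2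
  -- uniform bound on G
  set MG : ℝ := R * |γ| + ∑' j, u j with hMG
  have hGb : ∀ w ∈ S, ‖G w‖ ≤ MG := by
    intro w hw
    rw [hG]
    calc ‖w * ((-γ : ℝ) : ℂ) + ∑' j, fterm j w‖
        ≤ ‖w * ((-γ : ℝ) : ℂ)‖ + ‖∑' j, fterm j w‖ := norm_add_le _ _
      _ ≤ R * |γ| + ∑' j, u j := by
          gcongr
          · rw [norm_mul, Complex.norm_real, Real.norm_eq_abs, abs_neg]
            gcongr
            exact hwR w hw
          · exact tsum_of_norm_bounded usummable.hasSum (fun j => hbound j w hw)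
  have hexp : TendstoUniformlyOn (fun n w => Complex.exp
        (w * ((c n : ℝ) : ℂ) + ∑ j ∈ Finset.range n, fterm j w) / w)
      (fun w => Complex.exp (G w) / w) atTop S := by
    rw [Metric.tendstoUniformlyOn_iff] at hAG ⊢
    intro ε hε
    have hr2 : (0:ℝ) < z.re / 2 := by linarith
    have hden : (0:ℝ) < 2 * Real.exp MG + 1 := by positivity
    set δ : ℝ := min 1 (ε * (z.re / 2) / (2 * Real.exp MG + 1)) with hδdef
    have hδ : 0 < δ := lt_min one_pos (by positivity)
    filter_upwards [hAG δ hδ] with n hn w hw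
    set Aw := w * ((c n : ℝ) : ℂ) + ∑ j ∈ Finset.range n, fterm j w with hAw
    have h1 : dist (G w) Aw < δ := hn w hw
    have hdiff : ‖Aw - G w‖ < δ := by rwa [dist_comm, dist_eq_norm] at h1
    have hsplit : Complex.exp (G w) - Complex.exp Aw
        = Complex.exp (G w) * (1 - Complex.exp (Aw - G w)) := by
      rw [mul_sub, mul_one, ← Complex.exp_add]
      ring_nf
    have hexpG : ‖Complex.exp (G w)‖ ≤ Real.exp MG := by
      rw [Complex.norm_exp]
      exact Real.exp_le_exp.2 (le_trans (Complex.re_le_norm _) (hGb w hw))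
    have hsmall : ‖1 - Complex.exp (Aw - G w)‖ ≤ 2 * ‖Aw - G w‖ := by
      rw [norm_sub_rev]
      exact Complex.norm_exp_sub_one_le (le_trans hdiff.le (min_le_left _ _))
    have hwn : z.re / 2 < ‖w‖ :=
      lt_of_lt_of_le (hwre w hw) (Complex.re_le_norm w)
    have key : dist (Complex.exp (G w) / w) (Complex.exp Aw / w)
        ≤ Real.exp MG * (2 * δ) / (z.re / 2) := by
      rw [dist_eq_norm, div_sub_div_same, norm_div, hsplit, norm_mul]
      apply div_le_div₀ (by positivity) ?_ hr2 hwn.le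
      calc ‖Complex.exp (G w)‖ * ‖1 - Complex.exp (Aw - G w)‖
          ≤ Real.exp MG * (2 * ‖Aw - G w‖) := by
            apply mul_le_mul hexpG hsmall (norm_nonneg _) (Real.exp_pos _).le
        _ ≤ Real.exp MG * (2 * δ) := by gcongr
    refine lt_of_le_of_lt key ?_
    rw [div_lt_iff₀ hr2]
    calc Real.exp MG * (2 * δ)
        ≤ Real.exp MG * (2 * (ε * (z.re / 2) / (2 * Real.exp MG + 1))) := by
          gcongr
          exact min_le_right _ _
      _ = (2 * Real.exp MG) * (ε * (z.re / 2)) / (2 * Real.exp MG + 1) := by ring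
      _ < ε * (z.re / 2) := by
          rw [div_lt_iff₀ hden]
          nlinarith [Real.exp_pos MG, mul_pos hε hr2]
  have hev : ∀ᶠ n : ℕ in atTop, Set.EqOn
      (fun w => Complex.exp (w * ((c n : ℝ) : ℂ) + ∑ j ∈ Finset.range n, fterm j w) / w)
      (fun w => Complex.GammaSeq w n) S := by
    filter_upwards [Filter.eventually_ge_atTop 1] with n hn w hw
    exact exp_A_eq hn (hwpos w hw) (hw0 w hw)
  have hU : TendstoUniformlyOn (fun n w => Complex.GammaSeq w n)
      (fun w => Complex.exp (G w) / w) atTop S := hexp.congr hev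
  refine hU.congr_right fun w hw => ?_
  exact tendsto_nhds_unique (hU.tendsto_at hw) (Complex.GammaSeq_tendsto_Gamma w)

lemma logDeriv_gammaSeq {n : ℕ} (hn : 1 ≤ n) {z : ℂ} (hz : 0 < z.re) :
    logDeriv (fun w => Complex.GammaSeq w n) z
      = Complex.log n - ∑ j ∈ Finset.range (n+1), (z + (j:ℂ))⁻¹ := by
  have hn0 : ((n:ℂ)) ≠ 0 := Nat.cast_ne_zero.2 (by omega)
  have hzj : ∀ j : ℕ, z + (j:ℂ) ≠ 0 := by
    intro j h
    have h2 : (z + (j:ℂ)).re = z.re + j := by simp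
    rw [h] at h2
    simp only [Complex.zero_re] at h2
    have h3 : (0:ℝ) < z.re + j := by positivity
    linarith
  have hcp : ∀ w : ℂ, HasDerivAt (fun w : ℂ => (n:ℂ) ^ w) ((n:ℂ) ^ w * Complex.log n) w := by
    intro w
    simpa using (HasDerivAt.const_cpow (hasDerivAt_id w) (Or.inl hn0))
  have hcpne : ((n:ℂ)) ^ z ≠ 0 := by
    rw [Complex.cpow_def_of_ne_zero hn0]
    exact Complex.exp_ne_zero _
  have hfacne : ((n.factorial : ℂ)) ≠ 0 := Nat.cast_ne_zero.2 (Nat.factorial_ne_zero n)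
  have hfun : (fun w => Complex.GammaSeq w n)
      = fun w => ((n:ℂ) ^ w * (n.factorial : ℂ)) / ∏ j ∈ Finset.range (n+1), (w + (j:ℂ)) := by
    funext w
    rfl
  have hdnum : DifferentiableAt ℂ (fun w => (n:ℂ) ^ w * (n.factorial : ℂ)) z :=
    (hcp z).differentiableAt.mul_const _
  have hdden : DifferentiableAt ℂ (fun w => ∏ j ∈ Finset.range (n+1), (w + (j:ℂ))) z :=
    DifferentiableAt.fun_finsetProd (fun j _ => (differentiableAt_id.add_const _))
  have hnumne : ((n:ℂ) ^ z * (n.factorial : ℂ)) ≠ 0 := mul_ne_zero hcpne hfacne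
  have hdenne : (∏ j ∈ Finset.range (n+1), (z + (j:ℂ))) ≠ 0 :=
    Finset.prod_ne_zero_iff.2 fun j _ => hzj j
  rw [hfun, logDeriv_div z hnumne hdenne hdnum hdden]
  congr 1
  · rw [logDeriv_mul_const z _ hfacne]
    rw [logDeriv_apply, (hcp z).deriv]
    field_simp
  · rw [logDeriv_prod (fun j _ => hzj j) (fun j _ => differentiableAt_id.add_const _)]
    refine Finset.sum_congr rfl fun j _ => ?_
    rw [logDeriv_apply]
    have : deriv (fun w : ℂ => w + (j:ℂ)) z = 1 := by
      simp
    rw [this, one_div]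

lemma digamma_lim {z : ℂ} (hz : 0 < z.re) :
    Filter.Tendsto (fun n : ℕ => Complex.log n - ∑ j ∈ Finset.range (n+1), (z + (j:ℂ))⁻¹)
      atTop (𝓝 (_root_.digamma z)) := by
  have hball : z ∈ Metric.ball z (z.re/2) := Metric.mem_ball_self (by linarith)
  have hzj : ∀ w : ℂ, 0 < w.re → ∀ j : ℕ, w + (j:ℂ) ≠ 0 := by
    intro w hw j h
    have h2 : (w + (j:ℂ)).re = w.re + j := by simp
    rw [h] at h2
    simp only [Complex.zero_re] at h2
    have : (0:ℝ) < w.re + j := by positivity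
    linarith
  have hwpos : ∀ w ∈ Metric.ball z (z.re/2), 0 < w.re := by
    intro w hw
    rw [Metric.mem_ball, Complex.dist_eq] at hw
    have h1 : |(w - z).re| ≤ ‖w - z‖ := Complex.abs_re_le_norm _
    have h2 : (w - z).re = w.re - z.re := by simp
    have : |w.re - z.re| < z.re / 2 := by rw [← h2]; exact lt_of_le_of_lt h1 hw
    cases' abs_lt.1 this with hl hr
    linarith
  have hGne : Complex.Gamma z ≠ 0 := by
    apply Complex.Gamma_ne_zero
    intro m h
    have : z.re = -(m:ℝ) := by rw [h]; simp
    have h3 : (0:ℝ) ≤ (m:ℝ) := Nat.cast_nonneg m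
    linarith
  have hdiff : ∀ᶠ n : ℕ in atTop, DifferentiableOn ℂ (fun w => Complex.GammaSeq w n)
      (Metric.ball z (z.re/2)) := by
    filter_upwards [Filter.eventually_ge_atTop 1] with n hn
    intro w hw
    have hfun : (fun w => Complex.GammaSeq w n)
        = fun w => ((n:ℂ) ^ w * (n.factorial : ℂ)) / ∏ j ∈ Finset.range (n+1), (w + (j:ℂ)) := by
      funext w; rfl
    rw [hfun]
    apply DifferentiableAt.differentiableWithinAt
    apply DifferentiableAt.div
    · exact (differentiableAt_id.const_cpow
        (Or.inl (Nat.cast_ne_zero.2 (by omega)))).mul_const _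
    · exact DifferentiableAt.fun_finsetProd (fun j _ => differentiableAt_id.add_const _)
    · exact Finset.prod_ne_zero_iff.2 fun j _ => hzj w (hwpos w hw) j
  have h := Complex.logDeriv_tendsto (f := fun n w => Complex.GammaSeq w n) (g := Complex.Gamma)
    Metric.isOpen_ball hball (gammaSeq_unif hz).tendstoLocallyUniformlyOn hdiff hGne
  have hld : logDeriv Complex.Gamma z = _root_.digamma z := rfl
  rw [hld] at h
  refine h.congr' ?_
  filter_upwards [Filter.eventually_ge_atTop 1] with n hn
  exact logDeriv_gammaSeq hn hz

lemma imag_lim {z : ℂ} (hz : 0 < z.re) :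
    Filter.Tendsto (fun n : ℕ => ∑ j ∈ Finset.range (n+1), z.im / ((z.re + j)^2 + z.im^2))
      atTop (𝓝 ((_root_.digamma z).im)) := by
  have h := (Complex.continuous_im.tendsto _).comp (digamma_lim hz)
  refine h.congr' ?_
  filter_upwards [Filter.eventually_ge_atTop 1] with n hn
  simp only [Function.comp_apply, Complex.sub_im, Complex.im_sum]
  have hlog : (Complex.log (n:ℂ)).im = 0 := by
    rw [Complex.log_im, Complex.natCast_arg]
  rw [hlog]
  rw [zero_sub, ← Finset.sum_neg_distrib]

  refine Finset.sum_congr rfl fun j _ => ?_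
  rw [Complex.inv_im]
  have h1 : (z + (j:ℂ)).im = z.im := by simp
  have h2 : Complex.normSq (z + (j:ℂ)) = (z.re + j)^2 + z.im^2 := by
    rw [Complex.normSq_apply]
    simp only [Complex.add_re, Complex.add_im, Complex.natCast_re, Complex.natCast_im, add_zero]
    ring
  rw [h1, h2]
  ring

lemma arctan_deriv (b : ℝ) {t : ℝ} (ht : 0 < t) :
    HasDerivAt (fun s : ℝ => Real.arctan (b / s)) (-(b / (t^2 + b^2))) t := by
  have h1 : HasDerivAt (fun s : ℝ => b / s) (b * (-(t^2)⁻¹)) t := by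
    simpa [div_eq_mul_inv] using ((hasDerivAt_inv ht.ne').const_mul b)
  have h2 := (Real.hasDerivAt_arctan (b / t)).comp t h1
  refine h2.congr_deriv ?_
  have ht2 : t^2 ≠ 0 := pow_ne_zero 2 ht.ne'
  have hpos : (0:ℝ) < t^2 + b^2 := by positivity
  field_simp

lemma arctan_step (b : ℝ) {s : ℝ} (hs : 0 < s) :
    ∃ c ∈ Set.Ioo s (s+1),
      Real.arctan (b/s) - Real.arctan (b/(s+1)) = b / (c^2 + b^2) := by
  have hlt : s < s + 1 := by linarith
  have hcont : ContinuousOn (fun t : ℝ => Real.arctan (b/t)) (Set.Icc s (s+1)) := by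
    intro t ht
    exact (arctan_deriv b (lt_of_lt_of_le hs ht.1)).continuousAt.continuousWithinAt
  obtain ⟨c, hc, hceq⟩ := exists_hasDerivAt_eq_slope (fun t : ℝ => Real.arctan (b/t))
    (fun t => -(b/(t^2+b^2))) hlt hcont
    (fun t ht => arctan_deriv b (lt_trans hs ht.1))
  refine ⟨c, hc, ?_⟩
  have : s + 1 - s = 1 := by ring
  rw [this, div_one] at hceq
  linarith [hceq]

lemma tail_est {a b I : ℝ} (ha : 0 < a)
    (hI : Filter.Tendsto (fun n : ℕ => ∑ j ∈ Finset.range (n+1), b / ((a+(j:ℝ))^2 + b^2))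
      atTop (𝓝 I)) :
    |I - Real.arctan (b / a)| ≤ |b| / a^2 := by
  set h : ℕ → ℝ := fun j => Real.arctan (b / (a + (j:ℝ))) with hh
  set q : ℕ → ℝ := fun j => 1/((a+(j:ℝ))^2 + b^2) with hq
  have haj : ∀ j : ℕ, (0:ℝ) < a + (j:ℝ) := fun j => by positivity
  have hterm : ∀ j : ℕ, |b / ((a+(j:ℝ))^2 + b^2) - (h j - h (j+1))|
      ≤ |b| * (q j - q (j+1)) := by
    intro j
    obtain ⟨c, hc, hceq⟩ := arctan_step b (haj j)
    have hhd : h j - h (j+1) = b / (c^2 + b^2) := by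
      rw [hh]
      simp only []
      rw [← hceq]
      congr 2
      push_cast
      ring
    rw [hhd]
    have hc1 : a + (j:ℝ) < c := hc.1
    have hc2 : c < a + (j:ℝ) + 1 := hc.2
    have hX : (0:ℝ) < (a+(j:ℝ))^2 + b^2 := by positivity
    have hC : (0:ℝ) < c^2 + b^2 := by nlinarith [haj j]
    have hY : (0:ℝ) < (a+(j:ℝ)+1)^2 + b^2 := by positivity
    have hXC : (a+(j:ℝ))^2 + b^2 ≤ c^2 + b^2 := by nlinarith [haj j]
    have hCY : c^2 + b^2 ≤ (a+(j:ℝ)+1)^2 + b^2 := by nlinarith [haj j]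
    have e1 : b / ((a+(j:ℝ))^2 + b^2) - b / (c^2+b^2)
        = b * (1/((a+(j:ℝ))^2 + b^2) - 1/(c^2+b^2)) := by
      field_simp
    have h0 : (0:ℝ) ≤ 1/((a+(j:ℝ))^2 + b^2) - 1/(c^2+b^2) := by
      have := one_div_le_one_div_of_le hX hXC
      linarith
    rw [e1, abs_mul, _root_.abs_of_nonneg h0]
    apply mul_le_mul_of_nonneg_left _ (abs_nonneg b)
    have hq1 : q (j+1) ≤ 1/(c^2+b^2) := by
      have hcast : (a + ((j+1:ℕ):ℝ))^2 + b^2 = (a + (j:ℝ) + 1)^2 + b^2 := by push_cast; ring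
      show 1/((a + ((j+1:ℕ):ℝ))^2 + b^2) ≤ 1/(c^2+b^2)
      rw [hcast]
      exact one_div_le_one_div_of_le hC hCY
    have hqj : q j = 1/((a+(j:ℝ))^2 + b^2) := rfl
    rw [hqj]
    linarith
  have key : ∀ n : ℕ, |(∑ j ∈ Finset.range (n+1), b / ((a+(j:ℝ))^2 + b^2))
      - (h 0 - h (n+1))| ≤ |b| / a^2 := by
    intro n
    have htel : h 0 - h (n+1) = ∑ j ∈ Finset.range (n+1), (h j - h (j+1)) := by
      rw [Finset.sum_range_sub' h (n+1)]
    have htelq : ∑ j ∈ Finset.range (n+1), (q j - q (j+1)) = q 0 - q (n+1) := by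
      rw [Finset.sum_range_sub' q (n+1)]
    calc |(∑ j ∈ Finset.range (n+1), b / ((a+(j:ℝ))^2 + b^2)) - (h 0 - h (n+1))|
        = |∑ j ∈ Finset.range (n+1), (b / ((a+(j:ℝ))^2 + b^2) - (h j - h (j+1)))| := by
          rw [htel, ← Finset.sum_sub_distrib]
      _ ≤ ∑ j ∈ Finset.range (n+1), |b / ((a+(j:ℝ))^2 + b^2) - (h j - h (j+1))| :=
          Finset.abs_sum_le_sum_abs _ _
      _ ≤ ∑ j ∈ Finset.range (n+1), |b| * (q j - q (j+1)) :=
          Finset.sum_le_sum fun j _ => hterm j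
      _ = |b| * (q 0 - q (n+1)) := by rw [← Finset.mul_sum, htelq]
      _ ≤ |b| * q 0 := by
          have hqn : (0:ℝ) ≤ q (n+1) := by
            rw [hq]; positivity
          nlinarith [abs_nonneg b]
      _ ≤ |b| / a^2 := by
          have hq0 : q 0 ≤ 1/a^2 := by
            rw [hq]
            simp only [Nat.cast_zero, add_zero]
            apply one_div_le_one_div_of_le (by positivity)
            nlinarith [sq_nonneg b]
          calc |b| * q 0 ≤ |b| * (1/a^2) := by
                apply mul_le_mul_of_nonneg_left hq0 (abs_nonneg b)
            _ = |b| / a^2 := by ring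
  have hT : Filter.Tendsto (fun n : ℕ => h 0 - h (n+1)) atTop
      (𝓝 (Real.arctan (b / a))) := by
    have h1 : Filter.Tendsto (fun n : ℕ => b / (a + ((n:ℝ)+1))) atTop (𝓝 0) := by
      apply Filter.Tendsto.div_atTop tendsto_const_nhds
      apply Filter.tendsto_atTop_add_const_left
      exact Filter.tendsto_atTop_add_const_right _ _ tendsto_natCast_atTop_atTop
    have h2 : Filter.Tendsto (fun n : ℕ => h (n+1)) atTop (𝓝 0) := by
      have h3 := (Real.continuous_arctan.tendsto 0).comp h1
      rw [Real.arctan_zero] at h3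
      refine h3.congr fun n => ?_
      rw [hh]
      simp only [Function.comp_apply]
      congr 1
      push_cast
      ring
    have hlim : h 0 - 0 = Real.arctan (b / a) := by rw [sub_zero, hh]; simp
    exact hlim ▸ (tendsto_const_nhds.sub h2)
  have hD : Filter.Tendsto (fun n : ℕ =>
      |(∑ j ∈ Finset.range (n+1), b / ((a+(j:ℝ))^2 + b^2)) - (h 0 - h (n+1))|) atTop
      (𝓝 |I - Real.arctan (b / a)|) := by
    exact (hI.sub hT).abs
  exact le_of_tendsto hD (Filter.Eventually.of_forall key)


/-- Asymptotics of the tail of the pole expansion: for fixed real `x`, as the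
positive integer `m` tends to infinity,
`Im ψ(m - 1/2 + ix/π) - arctan(2x/((2m-1)π)) = O(1/m²)`. -/
theorem stmt_9 (x : ℝ) :
    ∃ C > (0 : ℝ), ∃ M : ℕ, ∀ m : ℕ, M ≤ m →
      |(_root_.digamma ((m : ℂ) - 1 / 2 + Complex.I * (x : ℂ) / (Real.pi : ℂ))).im -
          Real.arctan (2 * x / ((2 * (m : ℝ) - 1) * Real.pi))| ≤ C / (m : ℝ) ^ 2 := by
  have hπ : (0:ℝ) < Real.pi := Real.pi_pos
  refine ⟨4 * |x| / Real.pi + 1, by positivity, 1, ?_⟩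
  intro m hm
  have hm1 : (1:ℝ) ≤ (m:ℝ) := by exact_mod_cast hm
  set z : ℂ := (m : ℂ) - 1 / 2 + Complex.I * (x : ℂ) / (Real.pi : ℂ) with hzdef
  have hzform : z = ((((m:ℝ) - 1/2 : ℝ)) : ℂ) + (((x / Real.pi : ℝ)) : ℂ) * Complex.I := by
    rw [hzdef]; push_cast; ring
  have hre : z.re = (m:ℝ) - 1/2 := by rw [hzform]; simp
  have him : z.im = x / Real.pi := by rw [hzform]; simp
  have ha : 0 < (m:ℝ) - 1/2 := by linarith
  have hz : 0 < z.re := by rw [hre]; exact ha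
  have hI := imag_lim hz
  simp only [hre, him] at hI
  have hest := tail_est ha hI
  have harg : (x / Real.pi) / ((m:ℝ) - 1/2) = 2 * x / ((2 * (m:ℝ) - 1) * Real.pi) := by
    have h2 : (0:ℝ) < (2 * (m:ℝ) - 1) * Real.pi := mul_pos (by linarith) hπ
    rw [div_div, div_eq_div_iff (by positivity) h2.ne']
    ring
  rw [harg] at hest
  have h1 : ((m:ℝ))^2 / 4 ≤ ((m:ℝ) - 1/2)^2 := by nlinarith
  calc |(_root_.digamma z).im - Real.arctan (2 * x / ((2 * (m:ℝ) - 1) * Real.pi))|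
      ≤ |x / Real.pi| / ((m:ℝ) - 1/2)^2 := hest
    _ = (|x| / Real.pi) / ((m:ℝ) - 1/2)^2 := by rw [abs_div, abs_of_pos hπ]
    _ ≤ (|x| / Real.pi) / ((m:ℝ)^2 / 4) :=
        div_le_div_of_nonneg_left (by positivity) (by positivity) h1
    _ = (4 * |x| / Real.pi) / (m:ℝ)^2 := by
        field_simp
    _ ≤ (4 * |x| / Real.pi + 1) / (m:ℝ)^2 := by
        gcongr
        linarith
end

section
/- Fix integers N ≥ 1 and P ≥ 1. For each n with 1 ≤ n ≤ N set c_n = 3·2^{n-1} - 2 and define, for real y, the truncated multipole sum T_n^P(y) = Σ_{l=2^{n-1}}^{2^n - 1} Σ_{ν=0}^{P-1} ((2l - 1 - c_n)πi)^ν / (y - c_n πi)^{ν+1}. Then for every real number y, | 2/(1 + e^y) - [ 1 - 4 Σ_{n=1}^{N} Re T_n^P(y) - (2/π) Im ψ(2^N - 1/2 + iy/(2π)) ] | ≤ (2/π) · N / 3^P. -/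
open Complex Real

section helpers
open Filter Topology

lemma hasDerivAt_Gamma_conj {z d : ℂ} (h : HasDerivAt Complex.Gamma d z) :
    HasDerivAt Complex.Gamma ((starRingEnd ℂ) d) ((starRingEnd ℂ) z) := by
  rw [hasDerivAt_iff_tendsto_slope] at h ⊢
  have h2 : Tendsto (starRingEnd ℂ) (𝓝[≠] ((starRingEnd ℂ) z)) (𝓝[≠] z) := by
    apply tendsto_nhdsWithin_of_tendsto_nhds_of_eventually_within
    · have := (Complex.continuous_conj.tendsto ((starRingEnd ℂ) z))
      simp only [Complex.conj_conj] at this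
      exact this.mono_left nhdsWithin_le_nhds
    · filter_upwards [self_mem_nhdsWithin] with w hw
      simp only [Set.mem_compl_iff, Set.mem_singleton_iff] at hw ⊢
      intro hc
      exact hw (by simpa using congrArg (starRingEnd ℂ) hc)
  have h3 := (Complex.continuous_conj.tendsto d).comp (h.comp h2)
  refine h3.congr' ?_
  filter_upwards with w
  simp only [Function.comp_apply, slope_def_field, map_div₀, map_sub, Complex.Gamma_conj,
    Complex.conj_conj]

lemma hasDerivAt_Gamma {z : ℂ} (hz : ∀ m : ℕ, z ≠ -m) :
    HasDerivAt Complex.Gamma (deriv Complex.Gamma z) z :=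
  (Complex.differentiableAt_Gamma z hz).hasDerivAt

lemma digamma_add_one {z : ℂ} (hz : ∀ m : ℕ, z ≠ -m) :
    _root_.digamma (z + 1) = _root_.digamma z + 1 / z := by
  have h0 : z ≠ 0 := by simpa using hz 0
  have hz1 : ∀ m : ℕ, z + 1 ≠ -m := by
    intro m hm
    apply hz (m + 1)
    push_cast
    linear_combination hm
  have hG : Complex.Gamma z ≠ 0 := Complex.Gamma_ne_zero hz
  have hd := hasDerivAt_Gamma hz
  have h1 : HasDerivAt (fun w => w * Complex.Gamma w)
      (1 * Complex.Gamma z + z * deriv Complex.Gamma z) z := (hasDerivAt_id z).mul hd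
  have h2 : HasDerivAt (fun w => Complex.Gamma (w + 1))
      (1 * Complex.Gamma z + z * deriv Complex.Gamma z) z := by
    refine h1.congr_of_eventuallyEq ?_
    filter_upwards [eventually_ne_nhds h0] with w hw
    exact Complex.Gamma_add_one w hw
  have h3 : HasDerivAt (fun w => Complex.Gamma (w + 1)) (deriv Complex.Gamma (z + 1)) z := by
    simpa [Function.comp_def] using (hasDerivAt_Gamma hz1).comp z ((hasDerivAt_id z).add_const 1)
  have he : deriv Complex.Gamma (z + 1) = Complex.Gamma z + z * deriv Complex.Gamma z := by
    have := h3.unique h2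
    linear_combination this
  unfold _root_.digamma
  rw [he, Complex.Gamma_add_one z h0]
  field_simp
  ring

lemma digamma_conj {z : ℂ} (hz : ∀ m : ℕ, z ≠ -m) :
    _root_.digamma ((starRingEnd ℂ) z) = (starRingEnd ℂ) (_root_.digamma z) := by
  have hd := hasDerivAt_Gamma_conj (hasDerivAt_Gamma hz)
  unfold _root_.digamma
  rw [hd.deriv, Complex.Gamma_conj, map_div₀]

lemma digamma_reflection {z : ℂ} (hz : ∀ m : ℕ, z ≠ -m) (hz' : ∀ m : ℕ, 1 - z ≠ -m)
    (hs : Complex.sin (π * z) ≠ 0) :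
    _root_.digamma z - _root_.digamma (1 - z) = -π * Complex.cos (π * z) / Complex.sin (π * z) := by
  have hG1 : Complex.Gamma z ≠ 0 := Complex.Gamma_ne_zero hz
  have hG2 : Complex.Gamma (1 - z) ≠ 0 := Complex.Gamma_ne_zero hz'
  set d1 := deriv Complex.Gamma z
  set d2 := deriv Complex.Gamma (1 - z)
  have hΓ1 : HasDerivAt Complex.Gamma d1 z := hasDerivAt_Gamma hz
  have hΓ2 : HasDerivAt (fun w => Complex.Gamma (1 - w)) (-d2) z := by
    have := (hasDerivAt_Gamma hz').comp z ((hasDerivAt_id z).const_sub 1)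
    simpa [Function.comp_def] using this
  have hsin : HasDerivAt (fun w => Complex.sin (π * w)) (Complex.cos (π * z) * π) z := by
    have := (Complex.hasDerivAt_sin (π * z)).comp z ((hasDerivAt_id z).const_mul (π : ℂ))
    simpa [Function.comp_def] using this
  have hF : HasDerivAt
      (fun w => Complex.Gamma w * Complex.Gamma (1 - w) * Complex.sin (π * w))
      ((d1 * Complex.Gamma (1 - z) + Complex.Gamma z * (-d2)) * Complex.sin (π * z)
        + Complex.Gamma z * Complex.Gamma (1 - z) * (Complex.cos (π * z) * π)) z :=
    (hΓ1.mul hΓ2).mul hsin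
  have hF0 : HasDerivAt
      (fun w => Complex.Gamma w * Complex.Gamma (1 - w) * Complex.sin (π * w))
      0 z := by
    refine (hasDerivAt_const z (π : ℂ)).congr_of_eventuallyEq ?_
    have hev : ∀ᶠ w in 𝓝 z, Complex.sin (π * w) ≠ 0 := by
      have hc : Continuous fun w : ℂ => Complex.sin (π * w) :=
        Complex.continuous_sin.comp (continuous_const.mul continuous_id)
      exact (hc.continuousAt).eventually_ne hs
    filter_upwards [hev] with w hw
    rw [Complex.Gamma_mul_Gamma_one_sub w, div_mul_cancel₀ _ hw]
  have hD := hF.unique hF0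
  unfold _root_.digamma
  rw [div_sub_div _ _ hG1 hG2, div_eq_div_iff (mul_ne_zero hG1 hG2) hs]
  linear_combination hD

lemma ne_neg_nat_of_re_pos {z : ℂ} (h : 0 < z.re) : ∀ m : ℕ, z ≠ -(m : ℂ) := by
  intro m hm
  rw [hm] at h
  simp only [neg_re, natCast_re] at h
  have : (0:ℝ) ≤ m := Nat.cast_nonneg m
  linarith

lemma im_digamma_half (b : ℝ) :
    (_root_.digamma (1 / 2 + Complex.I * b)).im = π * Real.tanh (π * b) / 2 := by
  set z : ℂ := 1 / 2 + Complex.I * b with hzdef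
  have hre : z.re = 1 / 2 := by simp [hzdef]
  have him : z.im = b := by simp [hzdef]
  have hz : ∀ m : ℕ, z ≠ -(m : ℂ) := ne_neg_nat_of_re_pos (by rw [hre]; norm_num)
  have hz' : ∀ m : ℕ, 1 - z ≠ -(m : ℂ) :=
    ne_neg_nat_of_re_pos (by simp [Complex.sub_re, hre]; norm_num)
  have hconj : (starRingEnd ℂ) z = 1 - z := by
    apply Complex.ext <;> simp [hzdef] <;> norm_num
  have hsin : Complex.sin (π * z) = Real.cosh (π * b) := by
    have : (π : ℂ) * z = (π/2 : ℝ) + (π * b : ℝ) * Complex.I := by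
      rw [hzdef]; push_cast; ring
    rw [this, Complex.sin_add, Complex.cos_mul_I, Complex.sin_mul_I]
    rw [← Complex.ofReal_sin, ← Complex.ofReal_cos, Real.sin_pi_div_two, Real.cos_pi_div_two]
    rw [← Complex.ofReal_cosh]
    push_cast
    ring
  have hcos : Complex.cos (π * z) = -Real.sinh (π * b) * Complex.I := by
    have : (π : ℂ) * z = (π/2 : ℝ) + (π * b : ℝ) * Complex.I := by
      rw [hzdef]; push_cast; ring
    rw [this, Complex.cos_add, Complex.cos_mul_I, Complex.sin_mul_I]
    rw [← Complex.ofReal_sin, ← Complex.ofReal_cos, Real.sin_pi_div_two, Real.cos_pi_div_two]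
    rw [← Complex.ofReal_cosh, ← Complex.ofReal_sinh]
    push_cast
    ring
  have hs : Complex.sin (π * z) ≠ 0 := by
    rw [hsin]
    exact_mod_cast Complex.ofReal_ne_zero.mpr (ne_of_gt (Real.cosh_pos _))
  have href := digamma_reflection hz hz' hs
  rw [← hconj, digamma_conj hz] at href
  rw [Complex.sub_conj] at href
  rw [hsin, hcos] at href
  have hch : (Real.cosh (π * b) : ℂ) ≠ 0 := by
    exact_mod_cast Complex.ofReal_ne_zero.mpr (ne_of_gt (Real.cosh_pos _))
  have key : (2 * (_root_.digamma z).im : ℝ) * Complex.I = ((π * Real.tanh (π * b) : ℝ)) * Complex.I := by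
    rw [href]
    rw [Real.tanh_eq_sinh_div_cosh]
    push_cast
    field_simp
  have := mul_right_cancel₀ Complex.I_ne_zero key
  have h2 : (2 * (_root_.digamma z).im : ℝ) = π * Real.tanh (π * b) := by exact_mod_cast this
  linarith

lemma digamma_shift (z : ℂ) (hre : 0 < z.re) (m : ℕ) :
    _root_.digamma (z + m) = _root_.digamma z + ∑ k ∈ Finset.range m, (z + k)⁻¹ := by
  induction m with
  | zero => simp
  | succ n ih =>
    have hz : ∀ k : ℕ, z + n ≠ -(k : ℂ) := by
      apply ne_neg_nat_of_re_pos
      simp only [Complex.add_re, Complex.natCast_re]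
      positivity
    have : z + (n + 1 : ℕ) = (z + n) + 1 := by push_cast; ring
    rw [this, digamma_add_one hz, ih, Finset.sum_range_succ]
    ring

lemma two_div_pi_im_digamma (N : ℕ) (y : ℝ) :
    2 / π * (_root_.digamma ((2 ^ N : ℂ) - 1 / 2 + Complex.I * (y : ℂ) / (2 * (π : ℂ)))).im
      = Real.tanh (y / 2)
        - ∑ k ∈ Finset.range (2 ^ N - 1), 4 * y / ((2 * k + 1) ^ 2 * π ^ 2 + y ^ 2) := by
  have hπ : (0:ℝ) < π := Real.pi_pos
  have hπ' : (π:ℝ) ≠ 0 := ne_of_gt hπ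
  set b : ℝ := y / (2 * π) with hb
  set z : ℂ := 1 / 2 + Complex.I * b with hz
  have harg : (2 ^ N : ℂ) - 1 / 2 + Complex.I * (y : ℂ) / (2 * (π : ℂ))
      = z + ((2 ^ N - 1 : ℕ) : ℂ) := by
    have h1 : ((2 ^ N - 1 : ℕ) : ℂ) = 2 ^ N - 1 := by
      push_cast [Nat.cast_sub (Nat.one_le_two_pow)]
      ring
    rw [hz, h1, hb]
    have : (π : ℂ) ≠ 0 := by exact_mod_cast Complex.ofReal_ne_zero.mpr hπ'
    push_cast
    field_simp
    ring
  rw [harg, digamma_shift z (by simp [hz]) (2 ^ N - 1)]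
  rw [Complex.add_im, im_digamma_half b]
  have him : ∀ k : ℕ, ((z + k)⁻¹).im = -b / ((k + 1/2) ^ 2 + b ^ 2) := by
    intro k
    rw [Complex.inv_im]
    congr 1
    · simp [hz]
    · rw [Complex.normSq_apply]
      simp [hz]
      ring
  rw [Complex.im_sum]
  have hsum : ∀ k ∈ Finset.range (2 ^ N - 1),
      ((z + k)⁻¹).im = -(2 * y * π) / ((2 * k + 1) ^ 2 * π ^ 2 + y ^ 2) := by
    intro k _
    rw [him k, hb]
    rw [div_eq_div_iff]
    · field_simp
    · positivity
    · positivity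
  rw [Finset.sum_congr rfl hsum]
  have htanh : π * Real.tanh (π * b) = π * Real.tanh (y / 2) := by
    rw [hb]
    congr 2
    field_simp
  rw [htanh]
  rw [mul_add, Finset.mul_sum]
  have : 2 / π * (π * Real.tanh (y / 2) / 2) = Real.tanh (y / 2) := by field_simp
  rw [this]
  congr 1
  rw [← Finset.sum_neg_distrib]
  apply Finset.sum_congr rfl
  intro k _
  have hd : (2 * (k:ℝ) + 1) ^ 2 * π ^ 2 + y ^ 2 > 0 := by positivity
  field_simp
  ring

lemma fermi_eq (y : ℝ) : 2 / (1 + Real.exp y) = 1 - Real.tanh (y / 2) := by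
  have h1 : Real.exp (y/2) > 0 := Real.exp_pos _
  have h2 : Real.exp y > 0 := Real.exp_pos _
  have hsq : Real.exp (y/2) * Real.exp (y/2) = Real.exp y := by
    rw [← Real.exp_add]; ring_nf
  rw [Real.tanh_eq_sinh_div_cosh, Real.sinh_eq, Real.cosh_eq, Real.exp_neg]
  have hc : (Real.exp (y/2) + (Real.exp (y/2))⁻¹) / 2 > 0 := by positivity
  field_simp
  nlinarith [hsq]

lemma geom_remainder (w a : ℂ) (hw : w ≠ 0) (hwa : w - a ≠ 0) (P : ℕ) :
    ∑ ν ∈ Finset.range P, a ^ ν / w ^ (ν + 1) = (w - a)⁻¹ - a ^ P / (w ^ P * (w - a)) := by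
  induction P with
  | zero => simp
  | succ n ih =>
    rw [Finset.sum_range_succ, ih]
    have hwp : w ^ n ≠ 0 := pow_ne_zero _ hw
    field_simp
    ring

lemma abs_im_lower (y s : ℝ) (hs : 0 ≤ s) : s * π ≤ ‖(y : ℂ) - s * π * Complex.I‖ := by
  have him : ((y : ℂ) - s * π * Complex.I).im = -(s * π) := by simp
  calc s * π = |((y : ℂ) - s * π * Complex.I).im| := by
        rw [him, abs_neg, _root_.abs_of_nonneg (mul_nonneg hs Real.pi_pos.le)]
    _ ≤ _ := Complex.abs_im_le_norm _

lemma term_bound (y : ℝ) (P : ℕ) (c t : ℝ) (hc : 1 ≤ c) (ht : 1 ≤ t) :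
    ‖((t - c : ℝ) * (π:ℂ) * Complex.I) ^ P /
        (((y:ℂ) - c * π * Complex.I) ^ P * ((y:ℂ) - t * π * Complex.I))‖
      ≤ (|t - c| / c) ^ P / (t * π) := by
  have hπ := Real.pi_pos
  have h1 : ‖((t - c : ℝ) * (π:ℂ) * Complex.I)‖ = |t - c| * π := by
    rw [norm_mul, norm_mul, Complex.norm_I, Complex.norm_real, Complex.norm_real,
      Real.norm_eq_abs, Real.norm_eq_abs,
      abs_of_pos hπ]
    ring
  have hw : c * π ≤ ‖(y:ℂ) - c * π * Complex.I‖ := abs_im_lower y c (by linarith)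
  have hwa : t * π ≤ ‖(y:ℂ) - t * π * Complex.I‖ := abs_im_lower y t (by linarith)
  have hw0 : 0 < ‖(y:ℂ) - c * π * Complex.I‖ := lt_of_lt_of_le (by positivity) hw
  have hwa0 : 0 < ‖(y:ℂ) - t * π * Complex.I‖ := lt_of_lt_of_le (by positivity) hwa
  rw [norm_div, norm_mul, norm_pow, norm_pow, h1]
  rw [div_le_div_iff₀ (by positivity) (by positivity)]
  have hc0 : (0:ℝ) < c := by linarith
  calc (|t - c| * π) ^ P * (t * π)
      = (|t - c| / c) ^ P * ((c * π) ^ P * (t * π)) := by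
        rw [div_pow, mul_pow c]
        field_simp
        ring
    _ ≤ (|t - c| / c) ^ P *
        (‖(y:ℂ) - c * π * Complex.I‖ ^ P * ‖(y:ℂ) - t * π * Complex.I‖) := by
        gcongr

lemma sum_inv_odd_le (m : ℕ) (hm : 4 ≤ m) :
    ∑ l ∈ Finset.Icc m (2*m - 1), 1 / (2*(l:ℝ) - 1) ≤ 1 / 2 := by
  have hM : (4:ℝ) ≤ m := by exact_mod_cast hm
  rw [Finset.Icc_eq_cons_Ioc (by omega : m ≤ 2*m-1), Finset.sum_cons]
  have hcard : (Finset.Ioc m (2*m-1)).card = m - 1 := by rw [Nat.card_Ioc]; omega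
  have hb : ∀ l ∈ Finset.Ioc m (2*m-1), 1/(2*(l:ℝ)-1) ≤ 1/(2*(m:ℝ)+1) := by
    intro l hl
    rw [Finset.mem_Ioc] at hl
    have h1 : (m:ℝ) + 1 ≤ l := by exact_mod_cast hl.1
    apply one_div_le_one_div_of_le <;> linarith
  have hs := Finset.sum_le_card_nsmul _ _ _ hb
  rw [hcard] at hs
  have hms : ((m-1 : ℕ) : ℝ) = (m:ℝ) - 1 := by
    have : 1 ≤ m := by omega
    push_cast [Nat.cast_sub this]
    ring
  have hs' : ∑ l ∈ Finset.Ioc m (2*m-1), 1/(2*(l:ℝ)-1) ≤ ((m:ℝ)-1) * (1/(2*(m:ℝ)+1)) := by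
    calc _ ≤ (m-1 : ℕ) • (1/(2*(m:ℝ)+1)) := hs
      _ = ((m:ℝ)-1) * (1/(2*(m:ℝ)+1)) := by rw [nsmul_eq_mul, hms]
  have hkey : 1/(2*(m:ℝ)-1) + ((m:ℝ)-1) * (1/(2*(m:ℝ)+1)) ≤ 1/2 := by
    have h1 : (0:ℝ) < 2*(m:ℝ)-1 := by linarith
    have h2 : (0:ℝ) < 2*(m:ℝ)+1 := by linarith
    rw [mul_one_div, div_add_div _ _ h1.ne' h2.ne',
      div_le_div_iff₀ (by positivity) (by norm_num)]
    nlinarith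
  calc 1/(2*(m:ℝ)-1) + ∑ l ∈ Finset.Ioc m (2*m-1), 1/(2*(l:ℝ)-1)
      ≤ 1/(2*(m:ℝ)-1) + ((m:ℝ)-1) * (1/(2*(m:ℝ)+1)) := by linarith
    _ ≤ 1/2 := hkey

lemma group_bound (P : ℕ) (hP : 1 ≤ P) (m : ℕ) (hm : m = 1 ∨ m = 2 ∨ 4 ≤ m) :
    ∑ l ∈ Finset.Icc m (2*m - 1),
      (|2*(l:ℝ) - 1 - (3*(m:ℝ) - 2)| / (3*(m:ℝ) - 2)) ^ P / ((2*(l:ℝ) - 1) * π)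
      ≤ 1 / (2 * π * 3 ^ P) := by
  have hπ := Real.pi_pos
  rcases hm with hm | hm | hm
  · subst hm
    norm_num
    rw [zero_pow (by omega : P ≠ 0), zero_div]
    positivity
  · subst hm
    rw [show Finset.Icc 2 (2*2-1) = {2, 3} by decide, Finset.sum_insert (by decide),
      Finset.sum_singleton]
    have e2 : |2*((2:ℕ):ℝ) - 1 - (3*((2:ℕ):ℝ) - 2)| / (3*((2:ℕ):ℝ) - 2) = 1/4 := by
      norm_num
    have e3 : |2*((3:ℕ):ℝ) - 1 - (3*((2:ℕ):ℝ) - 2)| / (3*((2:ℕ):ℝ) - 2) = 1/4 := by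
      norm_num
    rw [e2, e3]
    have hq : ((1:ℝ)/4) ^ P = (1/3) ^ P * (3/4) ^ P := by
      rw [← mul_pow]; norm_num
    have hB : ((3:ℝ)/4) ^ P ≤ 3/4 := pow_le_of_le_one (by norm_num) (by norm_num) (by omega)
    have hA : (0:ℝ) < (1/3) ^ P := by positivity
    have h3 : ((1:ℝ)/3) ^ P = 1 / 3 ^ P := one_div_pow 3 P
    have hRHS : 1/(2*π*3^P) = (1/3:ℝ)^P/(2*π) := by
      rw [h3]
      have : (3:ℝ)^P ≠ 0 := by positivity
      field_simp
    rw [hRHS, hq]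
    have h2 : (2*((2:ℕ):ℝ) - 1) = 3 := by norm_num
    have h5 : (2*((3:ℕ):ℝ) - 1) = 5 := by norm_num
    rw [h2, h5]
    rw [div_add_div _ _ (by positivity) (by positivity),
      div_le_div_iff₀ (by positivity) (by positivity)]
    nlinarith [mul_le_mul_of_nonneg_left hB hA.le, sq_nonneg π]
  · have hm1 : (1:ℝ) ≤ m := by exact_mod_cast (by omega : 1 ≤ m)
    have hM : (4:ℝ) ≤ m := by exact_mod_cast hm
    have hc : (0:ℝ) < 3*(m:ℝ) - 2 := by linarith
    have step : ∀ l ∈ Finset.Icc m (2*m-1),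
        (|2*(l:ℝ) - 1 - (3*(m:ℝ) - 2)| / (3*(m:ℝ) - 2)) ^ P / ((2*(l:ℝ) - 1) * π)
          ≤ (1/3) ^ P / π * (1 / (2*(l:ℝ) - 1)) := by
      intro l hl
      rw [Finset.mem_Icc] at hl
      have hl1 : (m:ℝ) ≤ l := by exact_mod_cast hl.1
      have hl2 : (l:ℝ) ≤ 2*(m:ℝ) - 1 := by
        have : (l:ℝ) ≤ ((2*m-1 : ℕ) : ℝ) := by exact_mod_cast hl.2
        rwa [show ((2*m-1 : ℕ) : ℝ) = 2*(m:ℝ) - 1 by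
          push_cast [Nat.cast_sub (by omega : 1 ≤ 2*m)]; ring] at this
      have ht : (1:ℝ) ≤ 2*(l:ℝ) - 1 := by linarith
      have habs : |2*(l:ℝ) - 1 - (3*(m:ℝ) - 2)| ≤ (m:ℝ) - 1 := by
        rw [abs_le]; constructor <;> linarith
      have hq : |2*(l:ℝ) - 1 - (3*(m:ℝ) - 2)| / (3*(m:ℝ) - 2) ≤ 1/3 := by
        rw [div_le_iff₀ hc]
        calc |2*(l:ℝ) - 1 - (3*(m:ℝ) - 2)| ≤ (m:ℝ) - 1 := habs
          _ ≤ 1/3 * (3*(m:ℝ) - 2) := by linarith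
      calc (|2*(l:ℝ) - 1 - (3*(m:ℝ) - 2)| / (3*(m:ℝ) - 2)) ^ P / ((2*(l:ℝ) - 1) * π)
          ≤ ((1:ℝ)/3) ^ P / ((2*(l:ℝ) - 1) * π) := by
            gcongr
        _ = (1/3) ^ P / π * (1 / (2*(l:ℝ) - 1)) := by
            field_simp
    calc ∑ l ∈ Finset.Icc m (2*m-1),
        (|2*(l:ℝ) - 1 - (3*(m:ℝ) - 2)| / (3*(m:ℝ) - 2)) ^ P / ((2*(l:ℝ) - 1) * π)
        ≤ ∑ l ∈ Finset.Icc m (2*m-1), (1/3) ^ P / π * (1 / (2*(l:ℝ) - 1)) :=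
          Finset.sum_le_sum step
      _ = (1/3) ^ P / π * ∑ l ∈ Finset.Icc m (2*m-1), 1 / (2*(l:ℝ) - 1) := by
          rw [Finset.mul_sum]
      _ ≤ (1/3) ^ P / π * (1/2) := by
          apply mul_le_mul_of_nonneg_left (sum_inv_odd_le m hm) (by positivity)
      _ = 1 / (2 * π * 3 ^ P) := by
          rw [one_div_pow]
          field_simp

lemma dyadic_regroup (f : ℕ → ℝ) (N : ℕ) (hN : 1 ≤ N) :
    ∑ n ∈ Finset.Icc 1 N, ∑ l ∈ Finset.Icc (2^(n-1)) (2^n - 1), f l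
      = ∑ l ∈ Finset.Icc 1 (2^N - 1), f l := by
  induction N with
  | zero => omega
  | succ K ih =>
    rcases Nat.eq_zero_or_pos K with hK | hK
    · subst hK
      norm_num
    · rw [Finset.sum_Icc_succ_top (by omega : 1 ≤ K+1), ih hK]
      have e1 : ∀ x : ℕ, Finset.Icc 1 x = Finset.Ioc 0 x := by
        intro x
        rw [← Finset.Icc_add_one_left_eq_Ioc, zero_add]
      have hpow : (1:ℕ) ≤ 2^K := Nat.one_le_two_pow
      have e2 : Finset.Icc (2^(K+1-1)) (2^(K+1) - 1) = Finset.Ioc (2^K - 1) (2^(K+1) - 1) := by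
        have h : 2^(K+1-1) = (2^K - 1) + 1 := by
          have hKK : K + 1 - 1 = K := by omega
          rw [hKK]
          omega
        rw [h, Finset.Icc_add_one_left_eq_Ioc]
      rw [e1, e1, e2]
      exact Finset.sum_Ioc_consecutive f (by omega)
        (by have := Nat.one_le_two_pow (n := K); have := Nat.pow_lt_pow_right
              (by norm_num : 1 < 2) (by omega : K < K+1); omega)

lemma re_inv_eq (y t : ℝ) : (((y:ℂ) - t * π * Complex.I)⁻¹).re = y / (y^2 + t^2 * π^2) := by
  rw [Complex.inv_re, Complex.normSq_apply]
  simp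
  ring_nf

end helpers

lemma group_est (y : ℝ) (P : ℕ) (hP : 1 ≤ P) (n : ℕ) (hn : 1 ≤ n) :
    |4 * (∑ l ∈ Finset.Icc (2 ^ (n - 1) : ℕ) (2 ^ n - 1), ∑ ν ∈ Finset.range P,
        ((2 * (l : ℂ) - 1 - (3 * 2 ^ (n - 1) - 2)) * (Real.pi : ℂ) * Complex.I) ^ ν /
          ((y : ℂ) - (3 * 2 ^ (n - 1) - 2 : ℂ) * (Real.pi : ℂ) * Complex.I) ^ (ν + 1)).re
      - ∑ l ∈ Finset.Icc (2 ^ (n - 1) : ℕ) (2 ^ n - 1), 4 * y / ((2*(l:ℝ)-1)^2 * π^2 + y^2)|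
      ≤ 2 / (π * 3 ^ P) := by
  have hπ := Real.pi_pos
  set m : ℕ := 2 ^ (n - 1) with hm
  have hm1 : 1 ≤ m := Nat.one_le_two_pow
  have h2n : 2 ^ n - 1 = 2 * m - 1 := by
    rw [hm, ← pow_succ']
    congr 2
    omega
  have hmr : (1:ℝ) ≤ m := by exact_mod_cast hm1
  set c : ℝ := 3 * (m:ℝ) - 2 with hc
  have hc1 : (1:ℝ) ≤ c := by rw [hc]; linarith
  have hccast : (3 * 2 ^ (n - 1) - 2 : ℂ) = ((c : ℝ) : ℂ) := by
    rw [hc, hm]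
    push_cast
    ring
  have hwne : ((y:ℂ) - c * π * Complex.I) ≠ 0 := by
    intro h0
    have := abs_im_lower y c (by linarith)
    rw [h0] at this
    simp at this
    nlinarith
  rw [h2n]
  rw [Complex.re_sum, Finset.mul_sum, ← Finset.sum_sub_distrib]
  have hperl : ∀ l ∈ Finset.Icc m (2*m - 1),
      4 * (∑ ν ∈ Finset.range P,
        ((2 * (l : ℂ) - 1 - (3 * 2 ^ (n - 1) - 2)) * (Real.pi : ℂ) * Complex.I) ^ ν /
          ((y : ℂ) - (3 * 2 ^ (n - 1) - 2 : ℂ) * (Real.pi : ℂ) * Complex.I) ^ (ν + 1)).re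
      - 4 * y / ((2*(l:ℝ)-1)^2 * π^2 + y^2)
      = -4 * ((((2*(l:ℝ)-1 - c : ℝ):ℂ) * (π:ℂ) * Complex.I) ^ P /
          (((y:ℂ) - c * π * Complex.I) ^ P * ((y:ℂ) - (2*(l:ℝ)-1 : ℝ) * π * Complex.I))).re := by
    intro l hl
    rw [Finset.mem_Icc] at hl
    have hl1 : (m:ℝ) ≤ l := by exact_mod_cast hl.1
    set t : ℝ := 2*(l:ℝ) - 1 with ht
    have ht1 : (1:ℝ) ≤ t := by rw [ht]; linarith
    have htne : ((y:ℂ) - t * π * Complex.I) ≠ 0 := by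
      intro h0
      have := abs_im_lower y t (by linarith)
      rw [h0] at this
      simp at this
      nlinarith
    have hacast : (2 * (l : ℂ) - 1 - (3 * 2 ^ (n - 1) - 2)) * (Real.pi : ℂ) * Complex.I
        = ((t - c : ℝ) : ℂ) * (π:ℂ) * Complex.I := by
      rw [hccast, ht, hc]
      push_cast
      ring
    have hwa : ((y:ℂ) - c * π * Complex.I) - ((t - c : ℝ) : ℂ) * (π:ℂ) * Complex.I
        = (y:ℂ) - t * π * Complex.I := by
      push_cast
      ring
    have hgeo := geom_remainder ((y:ℂ) - c * π * Complex.I)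
      (((t - c : ℝ) : ℂ) * (π:ℂ) * Complex.I) hwne (by rw [hwa]; exact htne) P
    rw [hwa] at hgeo
    have hinner : (∑ ν ∈ Finset.range P,
        ((2 * (l : ℂ) - 1 - (3 * 2 ^ (n - 1) - 2)) * (Real.pi : ℂ) * Complex.I) ^ ν /
          ((y : ℂ) - (3 * 2 ^ (n - 1) - 2 : ℂ) * (Real.pi : ℂ) * Complex.I) ^ (ν + 1))
        = ((y:ℂ) - t * π * Complex.I)⁻¹
          - (((t - c : ℝ):ℂ) * (π:ℂ) * Complex.I) ^ P /
              (((y:ℂ) - c * π * Complex.I) ^ P * ((y:ℂ) - t * π * Complex.I)) := by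
      rw [← hgeo]
      apply Finset.sum_congr rfl
      intro ν _
      rw [hacast, hccast]
    rw [hinner, Complex.sub_re, re_inv_eq y t]
    rw [ht]
    ring
  rw [Finset.sum_congr rfl hperl]
  have habs := Finset.abs_sum_le_sum_abs
    (fun l : ℕ => -4 * ((((2*(l:ℝ)-1 - c : ℝ):ℂ) * (π:ℂ) * Complex.I) ^ P /
          (((y:ℂ) - c * π * Complex.I) ^ P * ((y:ℂ) - (2*(l:ℝ)-1 : ℝ) * π * Complex.I))).re)
    (Finset.Icc m (2*m - 1))
  refine le_trans habs ?_
  have hterm : ∀ l ∈ Finset.Icc m (2*m - 1),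
      |(-4 : ℝ) * ((((2*(l:ℝ)-1 - c : ℝ):ℂ) * (π:ℂ) * Complex.I) ^ P /
          (((y:ℂ) - c * π * Complex.I) ^ P * ((y:ℂ) - (2*(l:ℝ)-1 : ℝ) * π * Complex.I))).re|
      ≤ 4 * ((|2*(l:ℝ) - 1 - (3*(m:ℝ) - 2)| / (3*(m:ℝ) - 2)) ^ P / ((2*(l:ℝ) - 1) * π)) := by
    intro l hl
    rw [Finset.mem_Icc] at hl
    have hl1 : (m:ℝ) ≤ l := by exact_mod_cast hl.1
    set t : ℝ := 2*(l:ℝ) - 1 with ht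
    have ht1 : (1:ℝ) ≤ t := by rw [ht]; linarith
    rw [abs_mul, abs_neg]
    rw [show |(4:ℝ)| = 4 by norm_num]
    have h1 : |((((t - c : ℝ):ℂ) * (π:ℂ) * Complex.I) ^ P /
          (((y:ℂ) - c * π * Complex.I) ^ P * ((y:ℂ) - t * π * Complex.I))).re|
        ≤ ‖(((t - c : ℝ):ℂ) * (π:ℂ) * Complex.I) ^ P /
          (((y:ℂ) - c * π * Complex.I) ^ P * ((y:ℂ) - t * π * Complex.I))‖ :=
      Complex.abs_re_le_norm _
    have h2 := term_bound y P c t hc1 ht1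
    have := le_trans h1 h2
    have hcc : c = 3*(m:ℝ) - 2 := hc
    rw [← hcc]
    nlinarith [this]
  refine le_trans (Finset.sum_le_sum hterm) ?_
  rw [← Finset.mul_sum]
  have hm' : m = 1 ∨ m = 2 ∨ 4 ≤ m := by
    rw [hm]
    rcases Nat.lt_or_ge n 3 with h | h
    · interval_cases n
      · left; rfl
      · right; left; rfl
    · right; right
      calc 4 = 2^2 := by norm_num
        _ ≤ 2^(n-1) := Nat.pow_le_pow_right (by norm_num) (by omega)
  have := group_bound P hP m hm'
  calc 4 * ∑ l ∈ Finset.Icc m (2*m - 1),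
        (|2*(l:ℝ) - 1 - (3*(m:ℝ) - 2)| / (3*(m:ℝ) - 2)) ^ P / ((2*(l:ℝ) - 1) * π)
      ≤ 4 * (1 / (2 * π * 3 ^ P)) := by linarith
    _ = 2 / (π * 3 ^ P) := by
        field_simp
        ring

lemma abs_helper (a b T : ℝ) : 1 - T - (1 - 4 * a - (T - b)) = 4 * a - b := by ring

/-- Multipole representation of the Fermi-Dirac function with its uniform error
bound: grouping the poles `l = 2^{n-1}, …, 2^n - 1` (for `n = 1, …, N`) into
multipoles at centers `c_n πi`, `c_n = 3·2^{n-1} - 2`, keeping `P` terms of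
each geometric expansion, and expressing the tail via the digamma function,
the error is at most `(2/π)·N/3^P`, uniformly in `y`. -/
theorem stmt_10 (N P : ℕ) (hN : 1 ≤ N) (hP : 1 ≤ P) (y : ℝ) :
    |2 / (1 + Real.exp y) -
      (1 -
        4 * ∑ n ∈ Finset.Icc 1 N,
          (∑ l ∈ Finset.Icc (2 ^ (n - 1) : ℕ) (2 ^ n - 1), ∑ ν ∈ Finset.range P,
            ((2 * (l : ℂ) - 1 - (3 * 2 ^ (n - 1) - 2)) * (Real.pi : ℂ) * Complex.I) ^ ν /
              ((y : ℂ) - (3 * 2 ^ (n - 1) - 2 : ℂ) * (Real.pi : ℂ) * Complex.I) ^ (ν + 1)).re -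
        2 / Real.pi *
          (_root_.digamma ((2 ^ N : ℂ) - 1 / 2 +
            Complex.I * (y : ℂ) / (2 * (Real.pi : ℂ)))).im)| ≤
      2 / Real.pi * N / 3 ^ P := by
  have hπ := Real.pi_pos
  rw [fermi_eq y, two_div_pi_im_digamma N y]
  have hA : ∑ k ∈ Finset.range (2 ^ N - 1), 4 * y / ((2 * (k:ℝ) + 1) ^ 2 * π ^ 2 + y ^ 2)
      = ∑ n ∈ Finset.Icc 1 N, ∑ l ∈ Finset.Icc ((2:ℕ) ^ (n-1)) (2 ^ n - 1),
          4 * y / ((2 * (l:ℝ) - 1) ^ 2 * π ^ 2 + y ^ 2) := by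
    rw [dyadic_regroup (fun l => 4 * y / ((2 * (l:ℝ) - 1) ^ 2 * π ^ 2 + y ^ 2)) N hN]
    rw [← Finset.Ico_add_one_right_eq_Icc, Finset.sum_Ico_eq_sum_range]
    apply Finset.sum_congr rfl
    intro i _
    push_cast
    ring_nf
  rw [hA, abs_helper]
  rw [Finset.mul_sum, ← Finset.sum_sub_distrib]
  refine le_trans (Finset.abs_sum_le_sum_abs _ _) ?_
  have hper : ∀ n ∈ Finset.Icc 1 N,
      |4 * (∑ l ∈ Finset.Icc (2 ^ (n - 1) : ℕ) (2 ^ n - 1), ∑ ν ∈ Finset.range P,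
            ((2 * (l : ℂ) - 1 - (3 * 2 ^ (n - 1) - 2)) * (Real.pi : ℂ) * Complex.I) ^ ν /
              ((y : ℂ) - (3 * 2 ^ (n - 1) - 2 : ℂ) * (Real.pi : ℂ) * Complex.I) ^ (ν + 1)).re
        - ∑ l ∈ Finset.Icc ((2:ℕ) ^ (n-1)) (2 ^ n - 1),
            4 * y / ((2 * (l:ℝ) - 1) ^ 2 * π ^ 2 + y ^ 2)|
      ≤ 2 / (π * 3 ^ P) := by
    intro n hn
    exact group_est y P hP n (Finset.mem_Icc.mp hn).1
  refine le_trans (Finset.sum_le_sum hper) ?_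
  rw [Finset.sum_const, Nat.card_Icc]
  have hcd : N + 1 - 1 = N := by omega
  rw [hcd, nsmul_eq_mul]
  have h3 : (0:ℝ) < 3 ^ P := by positivity
  apply le_of_eq
  field_simp
end
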